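/- The recursively defined matrices A_0 = (1) and A_{k+1} = [[A_k, A_k, I],[A_k, -A_k, 0]] have 2^k rows and (k+2)·2^{k-1} columns for k ≥ 1, and each A_k is injective on binary vectors. -/

import Mathlib

/-- Number of columns of the Cantor–Mills matrix `A_k`. -/
def cmCols : ℕ → ℕ
  | 0 => 1
  | k + 1 => 2 * cmCols k + 2 ^ k

/-- The Cantor–Mills matrices: `A_0 = (1)` and
`A_{k+1} = [[A_k, A_k, I], [A_k, -A_k, 0]]`. -/
def cmMatrix : (k : ℕ) → Matrix (Fin (2 ^ k)) (Fin (cmCols k)) ℤ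
  | 0 => fun _ _ => 1
  | k + 1 =>
    Matrix.reindex
      (finSumFinEquiv.trans (finCongr (by rw [pow_succ]; ring)))
      ((Equiv.sumCongr finSumFinEquiv (Equiv.refl (Fin (2 ^ k)))).trans
        (finSumFinEquiv.trans (finCongr (by show cmCols k + cmCols k + 2 ^ k = cmCols (k + 1); simp [cmCols]; ring))))
      (Matrix.fromBlocks (Matrix.fromCols (cmMatrix k) (cmMatrix k))
        (1 : Matrix (Fin (2 ^ k)) (Fin (2 ^ k)) ℤ)
        (Matrix.fromCols (cmMatrix k) (-(cmMatrix k)))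
        (0 : Matrix (Fin (2 ^ k)) (Fin (2 ^ k)) ℤ))

/-! Split a binary vector for `A_{k+1}` into blocks `(u, v, w)`. The two block rows of
`A_{k+1}` give `A u + A v + w` and `A u - A v`; their sum `2 A u + w` determines `w` by parity,
hence `A u` and `A v`, and induction recovers `u` and `v`. -/

open Matrix Set

def binaryVecs (n : Type*) : Set (n → ℤ) := {x | ∀ j, x j = 0 ∨ x j = 1}

theorem cmCols_mul_two (k : ℕ) : cmCols k * 2 = (k + 2) * 2 ^ k := by
  induction k with
  | zero => rfl
  | succ k ih =>
    calc cmCols (k + 1) * 2 = 2 * (cmCols k * 2) + 2 ^ k * 2 := by rw [cmCols]; ring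
      _ = (k + 1 + 2) * 2 ^ (k + 1) := by rw [ih]; ring

theorem cmCols_eq (k : ℕ) (hk : 1 ≤ k) : cmCols k = (k + 2) * 2 ^ (k - 1) := by
  obtain ⟨k, rfl⟩ := Nat.exists_eq_add_of_le' hk
  refine Nat.eq_of_mul_eq_mul_right two_pos ?_
  rw [cmCols_mul_two, Nat.add_sub_cancel, mul_assoc, ← pow_succ]

-- Adding the two equations gives `2 a + c = 2 a' + c'`, and parity forces `c = c'`.
theorem eq_of_add_add_eq_of_sub_eq {a b c a' b' c' : ℤ} (hc : c = 0 ∨ c = 1)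
    (hc' : c' = 0 ∨ c' = 1) (hsum : a + b + c = a' + b' + c') (hdiff : a - b = a' - b') :
    a = a' ∧ b = b' ∧ c = c' := by
  omega

section

variable {m n m' n' : Type*} [Fintype n] [Fintype n']

theorem injOn_binaryVecs_reindex {M : Matrix m n ℤ} (e : m ≃ m') (f : n ≃ n')
    (hM : InjOn M.mulVec (binaryVecs n)) : InjOn (reindex e f M).mulVec (binaryVecs n') := by
  intro x hx y hy h
  rw [reindex_apply, submatrix_mulVec_equiv, submatrix_mulVec_equiv, Equiv.symm_symm] at h
  have hxy : x ∘ f = y ∘ f :=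
    hM (fun j => hx (f j)) (fun j => hy (f j)) (e.symm.surjective.injective_comp_right h)
  exact f.surjective.injective_comp_right hxy

variable [Fintype m] [DecidableEq m]

def cmStep (A : Matrix m n ℤ) : Matrix (m ⊕ m) ((n ⊕ n) ⊕ m) ℤ :=
  fromBlocks (fromCols A A) 1 (fromCols A (-A)) 0

theorem injOn_binaryVecs_cmStep {A : Matrix m n ℤ} (hA : InjOn A.mulVec (binaryVecs n)) :
    InjOn (cmStep A).mulVec (binaryVecs ((n ⊕ n) ⊕ m)) := by
  intro x hx y hy h
  simp only [cmStep, fromBlocks_mulVec, fromCols_mulVec, neg_mulVec, one_mulVec,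
    zero_mulVec, add_zero, ← sub_eq_add_neg, Sum.elim_eq_iff] at h
  obtain ⟨htop, hbot⟩ := h
  have key := fun i => eq_of_add_add_eq_of_sub_eq (hx (Sum.inr i)) (hy (Sum.inr i))
    (congrFun htop i) (congrFun hbot i)
  have hleft : x ∘ Sum.inl ∘ Sum.inl = y ∘ Sum.inl ∘ Sum.inl :=
    hA (fun _ => hx _) (fun _ => hy _) (funext fun i => (key i).1)
  have hmid : x ∘ Sum.inl ∘ Sum.inr = y ∘ Sum.inl ∘ Sum.inr :=
    hA (fun _ => hx _) (fun _ => hy _) (funext fun i => (key i).2.1)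
  ext ((j | j) | j)
  · exact congrFun hleft j
  · exact congrFun hmid j
  · exact (key j).2.2

end

theorem injOn_binaryVecs_cmMatrix (k : ℕ) :
    InjOn (cmMatrix k).mulVec (binaryVecs (Fin (cmCols k))) := by
  induction k with
  | zero =>
    have : Subsingleton (Fin (cmCols 0)) := inferInstanceAs (Subsingleton (Fin 1))
    intro x _ y _ h
    funext j
    simpa [Fintype.sum_subsingleton _ j, cmMatrix, mulVec, dotProduct] using congrFun h 0
  -- `cmMatrix (k + 1)` is by definition a reindexing of `cmStep (cmMatrix k)`.
  | succ k ih => exact injOn_binaryVecs_reindex _ _ (injOn_binaryVecs_cmStep ih)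

/-- `A_k` has `2^k` rows and `(k+2)·2^{k-1}` columns for `k ≥ 1`, and each
`A_k` is injective on binary vectors. -/
theorem cmMatrix_cols_and_injective :
    (∀ k : ℕ, 1 ≤ k → cmCols k = (k + 2) * 2 ^ (k - 1)) ∧
    (∀ k : ℕ, ∀ x y : Fin (cmCols k) → ℤ,
      (∀ j, x j = 0 ∨ x j = 1) → (∀ j, y j = 0 ∨ y j = 1) →
      (cmMatrix k).mulVec x = (cmMatrix k).mulVec y → x = y) :=
  ⟨cmCols_eq, fun k _ _ hx hy h => injOn_binaryVecs_cmMatrix k hx hy h⟩
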